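/- In the solitaire Ten Thousand game, the value function satisfies V*(τ,i,n) = τ for every state with τ ≥ 56, and stopping is optimal in these states. -/

import Mathlib

/-- A dice configuration `[f, o, t]`: `f` fives, `o` ones, and a
three-of-a-kind of value `t ∈ {2,3,4,6}` (`t = 0` meaning none). -/
abbrev Config := ℕ × ℕ × ℕ

/-- Score (in chips) of a configuration. -/
def score : Config → ℕ
  | (f, o, t) => f + 2 * o + (if 3 ≤ o then 14 else 0) + (if 3 ≤ f then 7 else 0) + 2 * t

/-- Number of scoring dice of a configuration. -/
def dice : Config → ℕ
  | (f, o, t) => f + o + (if t ≠ 0 then 3 else 0)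

/-- Number of scoring combinations of a configuration. -/
def combs : Config → ℕ
  | (f, o, t) => f + o + (if t ≠ 0 then 1 else 0)

/-- The table of scoring configurations together with the frequencies
`(f(1,i), f(2,i), f(3,i), f(4,i), f(5,i))` of each configuration among
the `6^n` outcomes of a roll of `n` dice. -/
def freqTable : List (Config × (ℕ × ℕ × ℕ × ℕ × ℕ)) :=
  [((1,0,0), (1, 8, 48, 240, 1020)),
   ((0,1,0), (1, 8, 48, 240, 1020)),
   ((2,0,0), (0, 1, 12, 96, 600)),
   ((1,1,0), (0, 2, 24, 192, 1200)),
   ((0,2,0), (0, 1, 12, 96, 600)),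
   ((3,0,0), (0, 0, 1, 16, 160)),
   ((2,1,0), (0, 0, 3, 48, 480)),
   ((1,2,0), (0, 0, 3, 48, 480)),
   ((0,3,0), (0, 0, 1, 16, 160)),
   ((0,0,2), (0, 0, 1, 13, 106)),
   ((0,0,3), (0, 0, 1, 13, 106)),
   ((0,0,4), (0, 0, 1, 13, 106)),
   ((0,0,6), (0, 0, 1, 13, 106)),
   ((4,0,0), (0, 0, 0, 1, 20)),
   ((3,1,0), (0, 0, 0, 4, 80)),
   ((2,2,0), (0, 0, 0, 6, 120)),
   ((1,3,0), (0, 0, 0, 4, 80)),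
   ((0,4,0), (0, 0, 0, 1, 20)),
   ((1,0,2), (0, 0, 0, 4, 65)),
   ((1,0,3), (0, 0, 0, 4, 65)),
   ((1,0,4), (0, 0, 0, 4, 65)),
   ((1,0,6), (0, 0, 0, 4, 65)),
   ((0,1,2), (0, 0, 0, 4, 65)),
   ((0,1,3), (0, 0, 0, 4, 65)),
   ((0,1,4), (0, 0, 0, 4, 65)),
   ((0,1,6), (0, 0, 0, 4, 65)),
   ((5,0,0), (0, 0, 0, 0, 1)),
   ((4,1,0), (0, 0, 0, 0, 5)),
   ((3,2,0), (0, 0, 0, 0, 10)),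
   ((2,3,0), (0, 0, 0, 0, 10)),
   ((1,4,0), (0, 0, 0, 0, 5)),
   ((0,5,0), (0, 0, 0, 0, 1)),
   ((2,0,2), (0, 0, 0, 0, 10)),
   ((2,0,3), (0, 0, 0, 0, 10)),
   ((2,0,4), (0, 0, 0, 0, 10)),
   ((2,0,6), (0, 0, 0, 0, 10)),
   ((1,1,2), (0, 0, 0, 0, 20)),
   ((1,1,3), (0, 0, 0, 0, 20)),
   ((1,1,4), (0, 0, 0, 0, 20)),
   ((1,1,6), (0, 0, 0, 0, 20)),
   ((0,2,2), (0, 0, 0, 0, 10)),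
   ((0,2,3), (0, 0, 0, 0, 10)),
   ((0,2,4), (0, 0, 0, 0, 10)),
   ((0,2,6), (0, 0, 0, 0, 10))]

/-- The set of scoring configurations. -/
def scoringConfigs : Finset Config := (freqTable.map Prod.fst).toFinset

/-- `freq n i` = number of outcomes of a roll of `n` dice giving the scoring
configuration `i` (0 if `i` is not a scoring configuration). -/
def freq (n : ℕ) (i : Config) : ℕ :=
  match freqTable.find? (fun e => decide (e.1 = i)) with
  | some e =>
    match n with
    | 1 => e.2.1
    | 2 => e.2.2.1
    | 3 => e.2.2.2.1
    | 4 => e.2.2.2.2.1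
    | 5 => e.2.2.2.2.2
    | _ => 0
  | none => 0

/-- `fEmpty n` = number of non-scoring outcomes of a roll of `n` dice. -/
def fEmpty : ℕ → ℕ
  | 1 => 4
  | 2 => 16
  | 3 => 60
  | 4 => 204
  | 5 => 600
  | _ => 0

/-- `j ≺ i`: configuration `j` is obtained from `i` by removing a nonempty
proper subset of its scoring combinations. -/
def Smaller (j i : Config) : Prop :=
  j.1 ≤ i.1 ∧ j.2.1 ≤ i.2.1 ∧ (j.2.2 = 0 ∨ j.2.2 = i.2.2) ∧ j ≠ i ∧ 0 < combs j

instance : DecidablePred fun p : Config × Config => Smaller p.1 p.2 := by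
  intro p; unfold Smaller; infer_instance

instance (i : Config) : DecidablePred (Smaller · i) := by
  intro j; unfold Smaller; infer_instance

/-- A (non-terminal) state `(τ, i, n)` of the solitaire Ten Thousand game:
accumulated chips `τ`, last configuration `i`, `n` dice available.  The
absorbing state `Δ` is not represented: its value is always `0`. -/
abbrev GState := ℕ × Config × ℕ

/-- Value of the action roll from accumulated score `τ` with `n` dice, given
a value function `V`: transition to `(τ + s(k), k, n − d(k) + 5·1{n = d(k)})`
with probability `f(n,k)/6^n`, and to the absorbing state `Δ` (value 0)
with probability `f(n,∅)/6^n`. -/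
noncomputable def rollVal (V : GState → ℝ) (τ n : ℕ) : ℝ :=
  ∑ k ∈ scoringConfigs,
    ((freq n k : ℝ) / 6 ^ n) * V (τ + score k, k, if n = dice k then 5 else n - dice k)

/-- Value of the best available move action (`0` if no move is available):
a move to `j ≺ i` transitions deterministically to
`(τ − s(i) + s(j), j, n + d(i) − d(j))`; moves are available only when
`n < 5` and `c(i) > 1`. -/
noncomputable def moveVal (V : GState → ℝ) : GState → ℝ
  | (τ, i, n) =>
    if n < 5 ∧ 1 < combs i then
      sSup ((fun j => V (τ - score i + score j, j, n + dice i - dice j)) ''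
        {j | Smaller j i})
    else 0

/-- The Bellman (value iteration) operator `U` of the solitaire Ten Thousand
game: maximum over the actions stop (reward `τ`), roll, and moves. -/
noncomputable def U (V : GState → ℝ) : GState → ℝ
  | (τ, i, n) => max (τ : ℝ) (max (rollVal V τ n) (moveVal V (τ, i, n)))

/-- `W k = U^k 0`, the `k`-th value iterate starting from the zero function. -/
noncomputable def W (k : ℕ) : GState → ℝ := U^[k] (fun _ => 0)

/-- `V* = lim_k W k = sup_k W k`, the value function of the game. -/
noncomputable def Vstar (x : GState) : ℝ := ⨆ k, W k x

/-!
`B(τ, i, n) = max(τ, s(i), 56)` bounds every value iterate; the `s(i)` term absorbs the truncated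
subtraction `τ − s(i)` in moves, so that a move never raises `max(τ, s(i))`. For rolling, the table
gives `∑ₖ f(n,k) s(k) ≤ 56 f(n,∅)`: the expected gain of the scoring outcomes is at most the
`M ≥ 56` chips lost on a non-scoring roll, so rolling is worth at most `M = max(τ, 56)`. For a
scoring configuration `s(i) ≤ 56`, so `B = τ` once `τ ≥ 56`, and stopping already attains `τ`.
-/

noncomputable def valueBound (x : GState) : ℝ := max (max (x.1 : ℝ) (score x.2.1)) 56

lemma valueBound_nonneg (x : GState) : 0 ≤ valueBound x :=
  le_trans (by norm_num) (le_max_right _ _)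

lemma score_le_of_smaller {j i : Config} (h : Smaller j i) : score j ≤ score i := by
  obtain ⟨f, o, t⟩ := j
  obtain ⟨f', o', t'⟩ := i
  obtain ⟨hf, ho, ht, -, -⟩ := h
  simp only [score] at hf ho ht ⊢
  rcases ht with rfl | rfl <;> split_ifs <;> omega

lemma score_le_of_mem_scoringConfigs {i : Config} (hi : i ∈ scoringConfigs) : score i ≤ 56 := by
  revert i
  decide

lemma freq_eq_zero {n : ℕ} (hn : n ∉ Finset.Icc 1 5) (k : Config) : freq n k = 0 := by
  obtain rfl | hn : n = 0 ∨ 6 ≤ n := by simp only [Finset.mem_Icc] at hn; omega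
  · unfold freq; split <;> rfl
  · obtain ⟨m, rfl⟩ := Nat.exists_eq_add_of_le' hn
    unfold freq; split <;> rfl

lemma sum_freq_add_fEmpty {n : ℕ} (hn : n ∈ Finset.Icc 1 5) :
    ∑ k ∈ scoringConfigs, freq n k + fEmpty n = 6 ^ n := by
  fin_cases hn <;> decide

lemma sum_freq_mul_score_le {n : ℕ} (hn : n ∈ Finset.Icc 1 5) :
    ∑ k ∈ scoringConfigs, freq n k * score k ≤ 56 * fEmpty n := by
  fin_cases hn <;> decide

lemma sum_freq_div_mul_add_score_le {n : ℕ} (hn : n ∈ Finset.Icc 1 5) {M : ℝ} (hM : 56 ≤ M) :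
    ∑ k ∈ scoringConfigs, (freq n k : ℝ) / 6 ^ n * (M + score k) ≤ M := by
  have htotal : ∑ k ∈ scoringConfigs, (freq n k : ℝ) + fEmpty n = 6 ^ n := by
    exact_mod_cast sum_freq_add_fEmpty hn
  have hgain : ∑ k ∈ scoringConfigs, (freq n k : ℝ) * score k ≤ 56 * fEmpty n := by
    exact_mod_cast sum_freq_mul_score_le hn
  have hloss : 0 ≤ (M - 56) * fEmpty n := mul_nonneg (by linarith) (Nat.cast_nonneg _)
  simp only [div_mul_eq_mul_div]
  rw [← Finset.sum_div, div_le_iff₀ (by positivity), ← htotal]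
  simp only [mul_add, Finset.sum_add_distrib, ← Finset.sum_mul]
  linarith

lemma rollVal_mono {V V' : GState → ℝ} (h : ∀ x, V x ≤ V' x) (τ n : ℕ) :
    rollVal V τ n ≤ rollVal V' τ n :=
  Finset.sum_le_sum fun _ _ => mul_le_mul_of_nonneg_left (h _) (by positivity)

lemma rollVal_valueBound_le (τ n : ℕ) : rollVal valueBound τ n ≤ max (τ : ℝ) 56 := by
  by_cases hn : n ∈ Finset.Icc 1 5
  · refine le_trans (Finset.sum_le_sum fun k _ => ?_)
      (sum_freq_div_mul_add_score_le hn (le_max_right _ _))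
    refine mul_le_mul_of_nonneg_left ?_ (by positivity)
    have hτ : (τ : ℝ) ≤ max (τ : ℝ) 56 := le_max_left _ _
    have hs : (0 : ℝ) ≤ score k := Nat.cast_nonneg _
    simp only [valueBound, Nat.cast_add]
    exact max_le (max_le (by linarith) (by linarith)) (by linarith [le_max_right (τ : ℝ) 56])
  · simp [rollVal, freq_eq_zero hn]

lemma moveVal_le_valueBound {V : GState → ℝ} (hV : ∀ x, V x ≤ valueBound x) (x : GState) :
    moveVal V x ≤ valueBound x := by
  obtain ⟨τ, i, n⟩ := x
  simp only [moveVal]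
  split_ifs
  · refine Real.sSup_le ?_ (valueBound_nonneg _)
    rintro _ ⟨j, hj, rfl⟩
    refine (hV _).trans (max_le_max ?_ le_rfl)
    have hs := score_le_of_smaller hj
    simp only [← Nat.cast_max, Nat.cast_le]
    omega
  · exact valueBound_nonneg _

lemma U_le_valueBound {V : GState → ℝ} (hV : ∀ x, V x ≤ valueBound x) (x : GState) :
    U V x ≤ valueBound x := by
  obtain ⟨τ, i, n⟩ := x
  have hroll : rollVal V τ n ≤ valueBound (τ, i, n) :=
    (rollVal_mono hV τ n).trans <|
      (rollVal_valueBound_le τ n).trans (max_le_max (le_max_left _ _) le_rfl)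
  exact max_le (le_max_of_le_left (le_max_left _ _)) (max_le hroll (moveVal_le_valueBound hV _))

lemma stop_le_U (V : GState → ℝ) (τ : ℕ) (i : Config) (n : ℕ) : (τ : ℝ) ≤ U V (τ, i, n) :=
  le_max_left _ _

lemma W_le_valueBound (k : ℕ) (x : GState) : W k x ≤ valueBound x := by
  induction k generalizing x with
  | zero => exact valueBound_nonneg x
  | succ k ih =>
    rw [W, Function.iterate_succ_apply']
    exact U_le_valueBound ih x

lemma Vstar_le_valueBound (x : GState) : Vstar x ≤ valueBound x :=
  ciSup_le fun k => W_le_valueBound k x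

lemma W_le_Vstar (k : ℕ) (x : GState) : W k x ≤ Vstar x :=
  le_ciSup ⟨valueBound x, by rintro _ ⟨k, rfl⟩; exact W_le_valueBound k x⟩ k

theorem stmt6_general (τ : ℕ) (i : Config) (n : ℕ)
    (hi : i ∈ scoringConfigs) (hτ : 56 ≤ τ) :
    Vstar (τ, i, n) = τ ∧ U Vstar (τ, i, n) = τ := by
  have hbound : valueBound (τ, i, n) = τ := by
    have hs : (score i : ℝ) ≤ τ := by exact_mod_cast (score_le_of_mem_scoringConfigs hi).trans hτ
    have h56 : (56 : ℝ) ≤ τ := by exact_mod_cast hτ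
    rw [valueBound, max_eq_left hs, max_eq_left h56]
  have hstop : (τ : ℝ) ≤ Vstar (τ, i, n) := by
    refine le_trans ?_ (W_le_Vstar 1 _)
    rw [W, Function.iterate_one]
    exact stop_le_U _ τ i n
  refine ⟨le_antisymm (hbound ▸ Vstar_le_valueBound _) hstop, ?_⟩
  exact le_antisymm (hbound ▸ U_le_valueBound Vstar_le_valueBound _) (stop_le_U _ τ i n)

/-- the value function satisfies `V*(τ,i,n) = τ` whenever
`τ ≥ 56`, and stopping (whose reward is `τ`) attains the Bellman maximum
at these states, i.e. stopping is optimal there. -/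
theorem stmt6 (τ : ℕ) (i : Config) (n : ℕ)
    (hi : i ∈ scoringConfigs) (hn : n ∈ Finset.Icc 1 5) (hτ : 56 ≤ τ) :
    Vstar (τ, i, n) = τ ∧ U Vstar (τ, i, n) = τ :=
  stmt6_general τ i n hi hτ
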